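/- arXiv:1407.1015 — 4 statements merged into one kernel-verified Lean document; each statement's English description precedes it below -/
import Mathlib

section
/- Let (A,0,1,∧,∨,C,S₁,S₂) be a T-structure and define a ⇒ b = b ∨ ((CS₁a ∨ S₁b) ∧ (CS₂a ∨ S₂b)) and ¬a = a ⇒ 0. Then (A,0,1,∧,∨,⇒,¬,S₁,S₂) is a HT-algebra; in particular ⇒ is the relative pseudocomplement (for all a,b,x ∈ A: a ∧ x ≤ b iff x ≤ a ⇒ b), and the equations HT2–HT7 hold. -/
/-- A T-structure: a bounded distributive lattice with unary operations
`C`, `S 0` (= S₁), `S 1` (= S₂) satisfying (T2)–(T7). -/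
structure TStructure (A : Type*) [DistribLattice A] [BoundedOrder A] where
  C : A → A
  S : Fin 2 → A → A
  /-- (T2) each Sᵢ preserves ∧ -/
  S_inf : ∀ i a b, S i (a ⊓ b) = S i a ⊓ S i b
  /-- (T2) each Sᵢ preserves ∨ -/
  S_sup : ∀ i a b, S i (a ⊔ b) = S i a ⊔ S i b
  /-- (T3) S₁a ∧ Ca = 0 -/
  S1_inf_C : ∀ a, S 0 a ⊓ C a = ⊥
  /-- (T3) S₁a ∨ Ca = 1 -/
  S1_sup_C : ∀ a, S 0 a ⊔ C a = ⊤
  /-- (T4) Sᵢ(Sⱼa) = Sⱼa -/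
  S_S : ∀ i j a, S i (S j a) = S j a
  /-- (T5) S₁0 = 0 -/
  S1_bot : S 0 ⊥ = ⊥
  /-- (T5) S₁1 = 1 -/
  S1_top : S 0 ⊤ = ⊤
  /-- (T6) determination principle -/
  determination : ∀ a b, (∀ i, S i a = S i b) → a = b
  /-- (T7) S₁a ≤ S₂a -/
  S1_le_S2 : ∀ a, S 0 a ≤ S 1 a

/-!
The maps `S₁, S₂` are bounded lattice endomorphisms whose images consist of complemented
elements (the complement of `Sⱼa` being `C Sⱼa`, itself fixed by both `Sᵢ`), and by the
determination principle `a ≤ b` holds as soon as `Sᵢa ≤ Sᵢb` for `i = 1, 2`. So every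
inequality can be checked after applying `S₁` and `S₂`, where `⇒` becomes
`S₁(a ⇒ b) = (CS₁a ∨ S₁b) ∧ (CS₂a ∨ S₂b)` and `S₂(a ⇒ b) = CS₂a ∨ S₂b`, i.e. Boolean
implications, and the residuation law reduces to its Boolean counterpart.
-/

lemma IsCompl.inf_sup_le {α : Type*} [DistribLattice α] [BoundedOrder α] {x y z : α}
    (h : IsCompl x y) : x ⊓ (y ⊔ z) ≤ z := by
  rw [inf_sup_left, h.inf_eq_bot, bot_sup_eq]
  exact inf_le_right

namespace TStructure

variable {A : Type*} [DistribLattice A] [BoundedOrder A] (T : TStructure A)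

lemma S_bot (i : Fin 2) : T.S i ⊥ = ⊥ := by
  simpa only [T.S1_bot] using T.S_S i 0 ⊥

lemma S_top (i : Fin 2) : T.S i ⊤ = ⊤ := by
  simpa only [T.S1_top] using T.S_S i 0 ⊤

def boundedLatticeHom (i : Fin 2) : BoundedLatticeHom A A where
  toFun := T.S i
  map_sup' := T.S_sup i
  map_inf' := T.S_inf i
  map_top' := T.S_top i
  map_bot' := T.S_bot i

lemma S_monotone (i : Fin 2) : Monotone (T.S i) :=
  OrderHomClass.mono (T.boundedLatticeHom i)

lemma isCompl_S_C (j : Fin 2) (a : A) : IsCompl (T.S j a) (T.C (T.S j a)) := by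
  simpa only [T.S_S] using IsCompl.of_eq (T.S1_inf_C (T.S j a)) (T.S1_sup_C (T.S j a))

lemma S_C_S (i j : Fin 2) (a : A) : T.S i (T.C (T.S j a)) = T.C (T.S j a) := by
  have h : IsCompl (T.S i (T.S j a)) (T.S i (T.C (T.S j a))) :=
    (T.isCompl_S_C j a).map (T.boundedLatticeHom i)
  rw [T.S_S] at h
  exact h.right_unique (T.isCompl_S_C j a)

lemma C_S_one_le_C_S_zero (a : A) : T.C (T.S 1 a) ≤ T.C (T.S 0 a) :=
  (T.isCompl_S_C 0 a).Antitone (T.isCompl_S_C 1 a) (T.S1_le_S2 a)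

lemma le_of_forall_S_le {a b : A} (h : ∀ i, T.S i a ≤ T.S i b) : a ≤ b :=
  inf_eq_left.1 <| T.determination _ _ fun i => by rw [T.S_inf]; exact inf_eq_left.2 (h i)

lemma S_zero_le (a : A) : T.S 0 a ≤ a :=
  T.le_of_forall_S_le <| Fin.forall_fin_two.2
    ⟨(T.S_S 0 0 a).le, (T.S_S 1 0 a).trans_le (T.S1_le_S2 a)⟩

def imp (a b : A) : A :=
  b ⊔ (T.C (T.S 0 a) ⊔ T.S 0 b) ⊓ (T.C (T.S 1 a) ⊔ T.S 1 b)

lemma S_zero_imp (a b : A) :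
    T.S 0 (T.imp a b) = (T.C (T.S 0 a) ⊔ T.S 0 b) ⊓ (T.C (T.S 1 a) ⊔ T.S 1 b) := by
  simp only [imp, T.S_sup, T.S_inf, T.S_S, T.S_C_S]
  exact sup_eq_right.2 (le_inf le_sup_right (le_sup_of_le_right (T.S1_le_S2 b)))

lemma S_one_imp (a b : A) : T.S 1 (T.imp a b) = T.C (T.S 1 a) ⊔ T.S 1 b := by
  simp only [imp, T.S_sup, T.S_inf, T.S_S, T.S_C_S]
  refine le_antisymm (sup_le le_sup_right inf_le_right) (sup_le ?_ le_sup_left)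
  exact le_sup_of_le_right <| le_inf (le_sup_of_le_left (T.C_S_one_le_C_S_zero a)) le_sup_left

lemma imp_S (i : Fin 2) (a b : A) : T.imp (T.S i a) (T.S i b) = T.C (T.S i a) ⊔ T.S i b := by
  simp only [imp, T.S_S, inf_idem]
  exact sup_eq_right.2 le_sup_right

lemma S_le_C_S_sup_S {a b x : A} (h : a ⊓ x ≤ b) (j : Fin 2) :
    T.S j x ≤ T.C (T.S j a) ⊔ T.S j b := by
  rw [sup_comm, (T.isCompl_S_C j a).le_sup_right_iff_inf_left_le, ← T.S_inf, inf_comm]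
  exact T.S_monotone j h

lemma inf_imp_le (a b : A) : a ⊓ T.imp a b ≤ b := by
  refine T.le_of_forall_S_le <| Fin.forall_fin_two.2 ⟨?_, ?_⟩
  · rw [T.S_inf, T.S_zero_imp]
    exact (inf_le_inf_left _ inf_le_left).trans (T.isCompl_S_C 0 a).inf_sup_le
  · rw [T.S_inf, T.S_one_imp]
    exact (T.isCompl_S_C 1 a).inf_sup_le

lemma le_imp_iff {a b x : A} : x ≤ T.imp a b ↔ a ⊓ x ≤ b := by
  refine ⟨fun h => (inf_le_inf_left a h).trans (T.inf_imp_le a b), fun h => ?_⟩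
  refine T.le_of_forall_S_le <| Fin.forall_fin_two.2 ⟨?_, ?_⟩
  · rw [T.S_zero_imp]
    exact le_inf (T.S_le_C_S_sup_S h 0) ((T.S1_le_S2 x).trans (T.S_le_C_S_sup_S h 1))
  · rw [T.S_one_imp]
    exact T.S_le_C_S_sup_S h 1

end TStructure

/-- Theorem 3.1: defining a ⇒ b = b ∨ ((CS₁a ∨ S₁b) ∧ (CS₂a ∨ S₂b)) and ¬a = a ⇒ 0
on a T-structure yields a HT-algebra: ⇒ is the relative pseudocomplement and
the equations (HT2)–(HT7) hold. -/
theorem stmt_4 {A : Type*} [DistribLattice A] [BoundedOrder A]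
    (T : TStructure A) (imp : A → A → A) (neg : A → A)
    (himp : ∀ a b, imp a b =
      b ⊔ ((T.C (T.S 0 a) ⊔ T.S 0 b) ⊓ (T.C (T.S 1 a) ⊔ T.S 1 b)))
    (hneg : ∀ a, neg a = imp a ⊥) :
    -- (HT1) ⇒ is the relative pseudocomplement
    (∀ a b x, a ⊓ x ≤ b ↔ x ≤ imp a b) ∧
    -- (HT2)
    (∀ i a b, T.S i (a ⊓ b) = T.S i a ⊓ T.S i b) ∧
    (∀ i a b, T.S i (a ⊔ b) = T.S i a ⊔ T.S i b) ∧
    -- (HT3)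
    (∀ a b, T.S 1 (imp a b) = imp (T.S 1 a) (T.S 1 b)) ∧
    -- (HT4)
    (∀ a b, T.S 0 (imp a b) = imp (T.S 0 a) (T.S 0 b) ⊓ imp (T.S 1 a) (T.S 1 b)) ∧
    -- (HT5)
    (∀ i j a, T.S i (T.S j a) = T.S j a) ∧
    -- (HT6)
    (∀ a, T.S 0 a ⊔ a = a) ∧
    -- (HT7)
    (∀ a, T.S 0 a ⊔ neg (T.S 0 a) = ⊤) := by
  obtain rfl : imp = T.imp := funext₂ himp
  obtain rfl : neg = fun a => T.imp a ⊥ := funext hneg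
  refine ⟨fun a b x => T.le_imp_iff.symm, T.S_inf, T.S_sup, fun a b => ?_, fun a b => ?_, T.S_S,
    fun a => sup_eq_right.2 (T.S_zero_le a), fun a => ?_⟩
  · rw [T.S_one_imp, T.imp_S]
  · rw [T.S_zero_imp, T.imp_S, T.imp_S]
  · dsimp only
    rw [← T.S1_bot, T.imp_S, T.S1_bot, sup_bot_eq]
    exact (T.isCompl_S_C 0 a).sup_eq_top
end

section
/- Let (A,0,1,∧,∨,⇒,¬,S₁,S₂) be a HT-algebra and define Ca = ¬S₁a for all a ∈ A. Then (A,0,1,∧,∨,C,S₁,S₂) is a T-structure; in particular the determination principle holds: if S₁a = S₁b and S₂a = S₂b then a = b. -/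
/-- A HT-algebra: a Heyting algebra with unary operations `S 0` (= S₁), `S 1` (= S₂)
satisfying (HT2)–(HT7).  (Note: in a Heyting algebra, ¬a = a ⇨ ⊥ = aᶜ.) -/
structure HTAlgebra (A : Type*) [HeytingAlgebra A] where
  S : Fin 2 → A → A
  /-- (HT2) each Sᵢ preserves ∧ -/
  S_inf : ∀ i a b, S i (a ⊓ b) = S i a ⊓ S i b
  /-- (HT2) each Sᵢ preserves ∨ -/
  S_sup : ∀ i a b, S i (a ⊔ b) = S i a ⊔ S i b
  /-- (HT3) S₂(a ⇒ b) = S₂a ⇒ S₂b -/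
  S2_himp : ∀ a b, S 1 (a ⇨ b) = S 1 a ⇨ S 1 b
  /-- (HT4) S₁(a ⇒ b) = (S₁a ⇒ S₁b) ∧ (S₂a ⇒ S₂b) -/
  S1_himp : ∀ a b, S 0 (a ⇨ b) = (S 0 a ⇨ S 0 b) ⊓ (S 1 a ⇨ S 1 b)
  /-- (HT5) SᵢSⱼa = Sⱼa -/
  S_S : ∀ i j a, S i (S j a) = S j a
  /-- (HT6) S₁a ∨ a = a -/
  S1_sup_self : ∀ a, S 0 a ⊔ a = a
  /-- (HT7) S₁a ∨ ¬S₁a = 1 -/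
  S1_lem : ∀ a, S 0 a ⊔ (S 0 a)ᶜ = ⊤

/-! By (HT4), if `S 0 a ≤ S 0 b` and `S 1 a ≤ S 1 b` then `S 0 (a ⇨ b) = ⊤`,
and since `S 0 (a ⇨ b) ≤ a ⇨ b` by (HT6) this forces `a ≤ b`. This gives the determination
principle; the other T-structure axioms are immediate from (HT2)–(HT7). -/

namespace HTAlgebra

variable {A : Type*} [HeytingAlgebra A] (H : HTAlgebra A)

theorem monotone_S (i : Fin 2) : Monotone (H.S i) := fun a b h =>
  le_of_sup_eq (by rw [← H.S_sup, sup_eq_right.mpr h])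

theorem S_zero_le (a : A) : H.S 0 a ≤ a :=
  le_of_sup_eq (H.S1_sup_self a)

theorem S_zero_le_S_one (a : A) : H.S 0 a ≤ H.S 1 a :=
  H.S_S 1 0 a ▸ H.monotone_S 1 (H.S_zero_le a)

theorem S_zero_bot : H.S 0 ⊥ = ⊥ :=
  le_bot_iff.mp (H.S_zero_le ⊥)

theorem S_zero_top : H.S 0 ⊤ = ⊤ := by
  simpa only [himp_self, inf_top_eq] using H.S1_himp ⊤ ⊤

theorem le_of_S_le {a b : A} (h₀ : H.S 0 a ≤ H.S 0 b) (h₁ : H.S 1 a ≤ H.S 1 b) : a ≤ b := by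
  have himp_top : H.S 0 (a ⇨ b) = ⊤ := by
    rw [H.S1_himp, himp_eq_top_iff.mpr h₀, himp_eq_top_iff.mpr h₁, inf_top_eq]
  exact himp_eq_top_iff.mp (top_le_iff.mp (himp_top ▸ H.S_zero_le (a ⇨ b)))

theorem eq_of_S_eq {a b : A} (h : ∀ i, H.S i a = H.S i b) : a = b :=
  le_antisymm (H.le_of_S_le (h 0).le (h 1).le) (H.le_of_S_le (h 0).ge (h 1).ge)

end HTAlgebra

/-- Theorem 3.2: defining Ca = ¬S₁a on a HT-algebra yields a T-structure,
i.e. (T2)–(T7) hold; in particular the determination principle (T6). -/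
theorem stmt_5 {A : Type*} [HeytingAlgebra A]
    (H : HTAlgebra A) (C : A → A) (hC : ∀ a, C a = (H.S 0 a)ᶜ) :
    -- (T2)
    (∀ i a b, H.S i (a ⊓ b) = H.S i a ⊓ H.S i b) ∧
    (∀ i a b, H.S i (a ⊔ b) = H.S i a ⊔ H.S i b) ∧
    -- (T3)
    (∀ a, H.S 0 a ⊓ C a = ⊥) ∧
    (∀ a, H.S 0 a ⊔ C a = ⊤) ∧
    -- (T4)
    (∀ i j a, H.S i (H.S j a) = H.S j a) ∧
    -- (T5)
    (H.S 0 ⊥ = ⊥) ∧ (H.S 0 ⊤ = ⊤) ∧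
    -- (T6) determination principle
    (∀ a b, (∀ i, H.S i a = H.S i b) → a = b) ∧
    -- (T7)
    (∀ a, H.S 0 a ≤ H.S 1 a) := by
  refine ⟨H.S_inf, H.S_sup, fun a => ?_, fun a => ?_, H.S_S, H.S_zero_bot, H.S_zero_top,
    fun a b => H.eq_of_S_eq, H.S_zero_le_S_one⟩
  · rw [hC]
    exact inf_compl_self _
  · rw [hC]
    exact H.S1_lem a
end

section
/- Let K = (W,R,s₁,s₂) be a HT-frame and let RC be the collection of all R-closed subsets of W, with operations ∩, ∪, SᵢX = s_i^{-1}(X), and CX = W \ S₁X. Then (RC, ∅, W, ∩, ∪, C, S₁, S₂) is a T-structure; in particular the determination principle holds: if for R-closed sets X,Y one has SᵢX = SᵢY for i = 1,2, then X = Y. -/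
/-- A HT-frame on a (nonempty) set of states `W`: a preorder `R` together with
functions `s 0` (= s₁), `s 1` (= s₂) satisfying (K1)–(K6). -/
structure HTFrame (W : Type*) where
  R : W → W → Prop
  s : Fin 2 → W → W
  /-- (K1) R is reflexive -/
  refl : ∀ w, R w w
  /-- (K1) R is transitive -/
  trans : ∀ w w' w'', R w w' → R w' w'' → R w w''
  /-- (K2) sⱼ(sᵢ(w)) = sⱼ(w) -/
  s_s : ∀ i j w, s j (s i w) = s j w
  /-- (K3) R(s₁(w), w) -/
  K3 : ∀ w, R (s 0 w) w
  /-- (K4) R(w, s₂(w)) -/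
  K4 : ∀ w, R w (s 1 w)
  /-- (K5) R(w,w') implies R(sᵢ(w),sᵢ(w')) and R(sᵢ(w'),sᵢ(w)) -/
  K5 : ∀ i w w', R w w' → R (s i w) (s i w') ∧ R (s i w') (s i w)
  /-- (K6) every state is in the image of some sᵢ -/
  K6 : ∀ w, ∃ (i : Fin 2) (w' : W), w = s i w'

/-- A subset X ⊆ W is R-closed if w ∈ X and R(w,w') imply w' ∈ X. -/
def RClosed {W : Type*} (K : HTFrame W) (X : Set W) : Prop :=
  ∀ w w', w ∈ X → K.R w w' → w' ∈ X

namespace RClosed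

variable {W : Type*} {K : HTFrame W} {X Y : Set W}

theorem empty : RClosed K ∅ := fun _ _ hw _ => hw

theorem univ : RClosed K Set.univ := fun _ _ _ _ => trivial

theorem inter (hX : RClosed K X) (hY : RClosed K Y) : RClosed K (X ∩ Y) :=
  fun w w' hw hR => ⟨hX w w' hw.1 hR, hY w w' hw.2 hR⟩

theorem union (hX : RClosed K X) (hY : RClosed K Y) : RClosed K (X ∪ Y) := by
  rintro w w' (hw | hw) hR
  exacts [Or.inl (hX w w' hw hR), Or.inr (hY w w' hw hR)]

theorem preimage_s (hX : RClosed K X) (i : Fin 2) : RClosed K (K.s i ⁻¹' X) :=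
  fun w w' hw hR => hX _ _ hw (K.K5 i w w' hR).1

-- (K5) makes sᵢ map R-related states to R-equivalent ones, so sᵢ⁻¹(X) is closed downwards too.
theorem compl_preimage_s (hX : RClosed K X) (i : Fin 2) : RClosed K (K.s i ⁻¹' X)ᶜ :=
  fun w w' hw hR hw' => hw (hX _ _ hw' (K.K5 i w w' hR).2)

theorem preimage_s_zero_subset_preimage_s_one (hX : RClosed K X) :
    K.s 0 ⁻¹' X ⊆ K.s 1 ⁻¹' X :=
  fun w hw => hX _ _ hw (K.trans _ _ _ (K.K3 w) (K.K4 w))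

end RClosed

namespace HTFrame

variable {W : Type*} (K : HTFrame W)

theorem preimage_s_preimage_s (i j : Fin 2) (X : Set W) :
    K.s i ⁻¹' (K.s j ⁻¹' X) = K.s j ⁻¹' X := by
  ext w
  simp only [Set.mem_preimage, K.s_s]

theorem eq_of_preimage_s_eq {X Y : Set W} (h : ∀ i, K.s i ⁻¹' X = K.s i ⁻¹' Y) : X = Y := by
  ext w
  obtain ⟨i, w', rfl⟩ := K.K6 w
  exact Set.ext_iff.mp (h i) w'

end HTFrame

theorem stmt_10_general {W : Type*} (K : HTFrame W) :
    -- (T1) RC contains ∅ and W and is closed under ∩, ∪ and the unary operations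
    RClosed K (∅ : Set W) ∧ RClosed K (Set.univ : Set W) ∧
    (∀ X Y, RClosed K X → RClosed K Y → RClosed K (X ∩ Y)) ∧
    (∀ X Y, RClosed K X → RClosed K Y → RClosed K (X ∪ Y)) ∧
    (∀ X, RClosed K X → ∀ i : Fin 2, RClosed K (K.s i ⁻¹' X)) ∧
    (∀ X, RClosed K X → RClosed K (K.s 0 ⁻¹' X)ᶜ) ∧
    -- (T2)
    (∀ X Y, RClosed K X → RClosed K Y → ∀ i : Fin 2,
      K.s i ⁻¹' (X ∩ Y) = (K.s i ⁻¹' X) ∩ (K.s i ⁻¹' Y)) ∧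
    (∀ X Y, RClosed K X → RClosed K Y → ∀ i : Fin 2,
      K.s i ⁻¹' (X ∪ Y) = (K.s i ⁻¹' X) ∪ (K.s i ⁻¹' Y)) ∧
    -- (T3)
    (∀ X, RClosed K X → (K.s 0 ⁻¹' X) ∩ (K.s 0 ⁻¹' X)ᶜ = ∅) ∧
    (∀ X, RClosed K X → (K.s 0 ⁻¹' X) ∪ (K.s 0 ⁻¹' X)ᶜ = Set.univ) ∧
    -- (T4)
    (∀ X, RClosed K X → ∀ i j : Fin 2,
      K.s i ⁻¹' (K.s j ⁻¹' X) = K.s j ⁻¹' X) ∧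
    -- (T5)
    (K.s 0 ⁻¹' (∅ : Set W) = ∅) ∧ (K.s 0 ⁻¹' (Set.univ : Set W) = Set.univ) ∧
    -- (T6) determination principle
    (∀ X Y, RClosed K X → RClosed K Y →
      (∀ i : Fin 2, K.s i ⁻¹' X = K.s i ⁻¹' Y) → X = Y) ∧
    -- (T7)
    (∀ X, RClosed K X → K.s 0 ⁻¹' X ⊆ K.s 1 ⁻¹' X) := by
    refine ⟨RClosed.empty, RClosed.univ, fun _ _ => RClosed.inter, fun _ _ => RClosed.union,
    fun _ => RClosed.preimage_s, fun _ hX => hX.compl_preimage_s 0,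
    fun _ _ _ _ _ => Set.preimage_inter, fun _ _ _ _ _ => Set.preimage_union,
    fun _ _ => Set.inter_compl_self _, fun _ _ => Set.union_compl_self _,
    fun X _ i j => K.preimage_s_preimage_s i j X, Set.preimage_empty, Set.preimage_univ,
    fun _ _ _ _ => K.eq_of_preimage_s_eq, fun _ => RClosed.preimage_s_zero_subset_preimage_s_one⟩

/-- The collection RC of R-closed subsets of W, with ∅, W, ∩, ∪,
SᵢX = sᵢ⁻¹(X) and CX = W \ S₁X, is a T-structure: RC is closed under all the
operations and (T2)–(T7) hold; in particular the determination principle (T6). -/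
theorem stmt_10 {W : Type*} [Nonempty W] (K : HTFrame W) :
    -- (T1) RC contains ∅ and W and is closed under ∩, ∪ and the unary operations
    RClosed K (∅ : Set W) ∧ RClosed K (Set.univ : Set W) ∧
    (∀ X Y, RClosed K X → RClosed K Y → RClosed K (X ∩ Y)) ∧
    (∀ X Y, RClosed K X → RClosed K Y → RClosed K (X ∪ Y)) ∧
    (∀ X, RClosed K X → ∀ i : Fin 2, RClosed K (K.s i ⁻¹' X)) ∧
    (∀ X, RClosed K X → RClosed K (K.s 0 ⁻¹' X)ᶜ) ∧
    -- (T2)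
    (∀ X Y, RClosed K X → RClosed K Y → ∀ i : Fin 2,
      K.s i ⁻¹' (X ∩ Y) = (K.s i ⁻¹' X) ∩ (K.s i ⁻¹' Y)) ∧
    (∀ X Y, RClosed K X → RClosed K Y → ∀ i : Fin 2,
      K.s i ⁻¹' (X ∪ Y) = (K.s i ⁻¹' X) ∪ (K.s i ⁻¹' Y)) ∧
    -- (T3)
    (∀ X, RClosed K X → (K.s 0 ⁻¹' X) ∩ (K.s 0 ⁻¹' X)ᶜ = ∅) ∧
    (∀ X, RClosed K X → (K.s 0 ⁻¹' X) ∪ (K.s 0 ⁻¹' X)ᶜ = Set.univ) ∧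
    -- (T4)
    (∀ X, RClosed K X → ∀ i j : Fin 2,
      K.s i ⁻¹' (K.s j ⁻¹' X) = K.s j ⁻¹' X) ∧
    -- (T5)
    (K.s 0 ⁻¹' (∅ : Set W) = ∅) ∧ (K.s 0 ⁻¹' (Set.univ : Set W) = Set.univ) ∧
    -- (T6) determination principle
    (∀ X Y, RClosed K X → RClosed K Y →
      (∀ i : Fin 2, K.s i ⁻¹' X = K.s i ⁻¹' Y) → X = Y) ∧
    -- (T7)
    (∀ X, RClosed K X → K.s 0 ⁻¹' X ⊆ K.s 1 ⁻¹' X) :=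
  stmt_10_general K
end

section
/- Let A be a HT-algebra, W the set of all prime filters of A, R the inclusion relation ⊆ on W, and sᵢ(P) = {x ∈ A : Sᵢx ∈ P} for i = 1,2. Then the system K = (W,R,s₁,s₂) is a HT-frame, i.e. it satisfies conditions (K1)–(K6). -/
/-- A prime filter of a lattice: a proper nonempty upward-closed subset closed
under ∧ such that a ∨ b ∈ P implies a ∈ P or b ∈ P. -/
def IsPrimeFilter {A : Type*} [Lattice A] (P : Set A) : Prop :=
  P.Nonempty ∧ P ≠ Set.univ ∧
  (∀ a b, a ∈ P → a ≤ b → b ∈ P) ∧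
  (∀ a b, a ∈ P → b ∈ P → a ⊓ b ∈ P) ∧
  (∀ a b, a ⊔ b ∈ P → a ∈ P ∨ b ∈ P)

/-!
Each `Sᵢ` is a bounded lattice endomorphism, so `sᵢ(P)`, the preimage of a prime filter, is again
a prime filter. Every `Sᵢ a` is complemented (HT5, HT7), so a prime filter `P ⊆ Q` contains every
`Sᵢ a ∈ Q`, which gives (K5). For (K6), either `P = s₁(P)`, or some `x ∈ P` has `S₁ x ∉ P`;
then `y = x ⊓ ¬S₁ x ∈ P` satisfies `S₁ y = ⊥`, and HT4 turns this into `S₂ a ⊓ y ≤ a`, so `P = s₂(P)`.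
-/

namespace IsPrimeFilter

variable {α β : Type*} [Lattice α] {P Q : Set α} {a b : α}

theorem mem_of_le (hP : IsPrimeFilter P) (ha : a ∈ P) (hab : a ≤ b) : b ∈ P :=
  hP.2.2.1 a b ha hab

theorem inf_mem (hP : IsPrimeFilter P) (ha : a ∈ P) (hb : b ∈ P) : a ⊓ b ∈ P :=
  hP.2.2.2.1 a b ha hb

theorem mem_or_mem (hP : IsPrimeFilter P) (h : a ⊔ b ∈ P) : a ∈ P ∨ b ∈ P :=
  hP.2.2.2.2 a b h

theorem top_mem [OrderTop α] (hP : IsPrimeFilter P) : ⊤ ∈ P :=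
  let ⟨_, ha⟩ := hP.1
  hP.mem_of_le ha le_top

theorem bot_notMem [OrderBot α] (hP : IsPrimeFilter P) : ⊥ ∉ P := fun h =>
  hP.2.1 (Set.eq_univ_of_forall fun _ => hP.mem_of_le h bot_le)

theorem mem_or_mem_of_isCompl [BoundedOrder α] (hP : IsPrimeFilter P) (h : IsCompl a b) :
    a ∈ P ∨ b ∈ P :=
  hP.mem_or_mem (h.sup_eq_top ▸ hP.top_mem)

theorem notMem_of_isCompl [BoundedOrder α] (hP : IsPrimeFilter P) (h : IsCompl a b)
    (ha : a ∈ P) : b ∉ P := fun hb =>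
  hP.bot_notMem (h.inf_eq_bot ▸ hP.inf_mem ha hb)

theorem mem_of_subset_of_isCompl [BoundedOrder α] (hP : IsPrimeFilter P) (hQ : IsPrimeFilter Q)
    (hPQ : P ⊆ Q) (h : IsCompl a b) (ha : a ∈ Q) : a ∈ P :=
  (hP.mem_or_mem_of_isCompl h).resolve_right fun hb => hQ.notMem_of_isCompl h ha (hPQ hb)

theorem comap [Lattice β] [BoundedOrder α] [BoundedOrder β] (f : BoundedLatticeHom α β)
    {P : Set β} (hP : IsPrimeFilter P) : IsPrimeFilter (f ⁻¹' P) := by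
  refine ⟨⟨⊤, ?_⟩, fun h => ?_, fun a b ha hab => ?_, fun a b ha hb => ?_, fun a b h => ?_⟩
  · simpa only [Set.mem_preimage, map_top] using hP.top_mem
  · exact hP.bot_notMem (map_bot f ▸ (h ▸ Set.mem_univ ⊥ : ⊥ ∈ f ⁻¹' P))
  · exact hP.mem_of_le ha (OrderHomClass.mono f hab)
  · simpa only [Set.mem_preimage, map_inf] using hP.inf_mem ha hb
  · have h' : f a ⊔ f b ∈ P := by rwa [← map_sup]
    exact hP.mem_or_mem h'

end IsPrimeFilter

namespace HTAlgebra

variable {A : Type*} [HeytingAlgebra A] (H : HTAlgebra A)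

theorem le_of_S_zero_himp_eq_top {a b : A} (h : H.S 0 (a ⇨ b) = ⊤) : a ≤ b :=
  himp_eq_top_iff.mp (top_le_iff.mp (h ▸ H.S_zero_le (a ⇨ b)))

theorem S_bot (i : Fin 2) : H.S i ⊥ = ⊥ := by
  have h₀ : H.S 0 ⊥ = ⊥ := le_bot_iff.mp (H.S_zero_le ⊥)
  rw [← h₀, H.S_S, h₀]

theorem S_top (i : Fin 2) : H.S i ⊤ = ⊤ := by
  have h₁ : H.S 1 ⊤ = ⊤ := by simpa only [himp_self] using H.S2_himp ⊤ ⊤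
  rw [← h₁, H.S_S, h₁]

def toBoundedLatticeHom (i : Fin 2) : BoundedLatticeHom A A where
  toFun := H.S i
  map_sup' := H.S_sup i
  map_inf' := H.S_inf i
  map_top' := H.S_top i
  map_bot' := H.S_bot i

theorem le_S_one (a : A) : a ≤ H.S 1 a :=
  H.le_of_S_zero_himp_eq_top <| by
    rw [H.S1_himp, H.S_S, H.S_S, himp_self, inf_top_eq, himp_eq_top_iff]
    exact H.S_zero_le_S_one a

theorem isCompl_S_compl (i : Fin 2) (a : A) : IsCompl (H.S i a) (H.S i a)ᶜ :=
  ⟨disjoint_compl_right, codisjoint_iff.mpr (H.S_S 0 i a ▸ H.S1_lem (H.S i a))⟩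

theorem S_zero_compl_le (a : A) : H.S 0 aᶜ ≤ (H.S 0 a)ᶜ := by
  rw [← himp_bot, ← himp_bot, H.S1_himp, H.S_bot]
  exact inf_le_left

theorem S_zero_inf_compl_S_zero (x : A) : H.S 0 (x ⊓ (H.S 0 x)ᶜ) = ⊥ :=
  le_bot_iff.mp <| calc
    H.S 0 (x ⊓ (H.S 0 x)ᶜ) ≤ H.S 0 x ⊓ (H.S 0 (H.S 0 x))ᶜ := by
      rw [H.S_inf]
      exact inf_le_inf_left _ (H.S_zero_compl_le _)
    _ = ⊥ := by rw [H.S_S, inf_compl_eq_bot]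

theorem S_one_inf_le_of_S_zero_eq_bot {y : A} (hy : H.S 0 y = ⊥) (a : A) : H.S 1 a ⊓ y ≤ a := by
  have hya : y ≤ H.S 1 a ⇨ a := H.le_of_S_zero_himp_eq_top <| by
    rw [H.S1_himp, hy, bot_himp, top_inf_eq, H.S2_himp, H.S_S, himp_self, himp_top]
  exact le_himp_iff'.mp hya

variable {P Q : Set A}

theorem isPrimeFilter_preimage_S (hP : IsPrimeFilter P) (i : Fin 2) :
    IsPrimeFilter {x | H.S i x ∈ P} :=
  hP.comap (H.toBoundedLatticeHom i)

theorem preimage_S_zero_subset (hP : IsPrimeFilter P) : {x | H.S 0 x ∈ P} ⊆ P :=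
  fun x hx => hP.mem_of_le hx (H.S_zero_le x)

theorem subset_preimage_S_one (hP : IsPrimeFilter P) : P ⊆ {x | H.S 1 x ∈ P} :=
  fun x hx => hP.mem_of_le hx (H.le_S_one x)

theorem preimage_S_subset_of_subset (hP : IsPrimeFilter P) (hQ : IsPrimeFilter Q) (hPQ : P ⊆ Q)
    (i : Fin 2) : {x | H.S i x ∈ Q} ⊆ {x | H.S i x ∈ P} :=
  fun x => hP.mem_of_subset_of_isCompl hQ hPQ (H.isCompl_S_compl i x)

theorem preimage_S_one_subset_of_S_zero_notMem (hP : IsPrimeFilter P) {x : A} (hx : x ∈ P)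
    (hSx : H.S 0 x ∉ P) : {a | H.S 1 a ∈ P} ⊆ P := by
  intro a ha
  have hcompl : (H.S 0 x)ᶜ ∈ P :=
    (hP.mem_or_mem_of_isCompl (H.isCompl_S_compl 0 x)).resolve_left hSx
  exact hP.mem_of_le (hP.inf_mem ha (hP.inf_mem hx hcompl))
    (H.S_one_inf_le_of_S_zero_eq_bot (H.S_zero_inf_compl_S_zero x) a)

theorem eq_preimage_S_zero_or_eq_preimage_S_one (hP : IsPrimeFilter P) :
    P = {x | H.S 0 x ∈ P} ∨ P = {x | H.S 1 x ∈ P} := by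
  by_cases h : ∀ x ∈ P, H.S 0 x ∈ P
  · exact Or.inl (subset_antisymm h (H.preimage_S_zero_subset hP))
  · push Not at h
    obtain ⟨x, hx, hSx⟩ := h
    exact Or.inr (subset_antisymm (H.subset_preimage_S_one hP)
      (H.preimage_S_one_subset_of_S_zero_notMem hP hx hSx))

end HTAlgebra

/-- The canonical frame of a HT-algebra: W = prime filters of A, R = ⊆,
sᵢ(P) = {x : Sᵢx ∈ P}.  It is a HT-frame: s₁, s₂ map W into W and
conditions (K1)–(K6) hold. -/
theorem stmt_14 {A : Type*} [HeytingAlgebra A] (H : HTAlgebra A) :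
    -- (K0) s₁, s₂ are functions on W
    (∀ P : Set A, IsPrimeFilter P → ∀ i : Fin 2, IsPrimeFilter {x | H.S i x ∈ P}) ∧
    -- (K1) ⊆ is reflexive and transitive on W
    (∀ P : Set A, IsPrimeFilter P → P ⊆ P) ∧
    (∀ P Q T : Set A, IsPrimeFilter P → IsPrimeFilter Q → IsPrimeFilter T →
      P ⊆ Q → Q ⊆ T → P ⊆ T) ∧
    -- (K2) sⱼ(sᵢ(P)) = sⱼ(P)
    (∀ P : Set A, IsPrimeFilter P → ∀ i j : Fin 2,
      {x | H.S j x ∈ {y | H.S i y ∈ P}} = {x | H.S j x ∈ P}) ∧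
    -- (K3) s₁(P) ⊆ P
    (∀ P : Set A, IsPrimeFilter P → {x | H.S 0 x ∈ P} ⊆ P) ∧
    -- (K4) P ⊆ s₂(P)
    (∀ P : Set A, IsPrimeFilter P → P ⊆ {x | H.S 1 x ∈ P}) ∧
    -- (K5) P ⊆ Q implies sᵢ(P) ⊆ sᵢ(Q) and sᵢ(Q) ⊆ sᵢ(P)
    (∀ P Q : Set A, IsPrimeFilter P → IsPrimeFilter Q → P ⊆ Q → ∀ i : Fin 2,
      {x | H.S i x ∈ P} ⊆ {x | H.S i x ∈ Q} ∧
      {x | H.S i x ∈ Q} ⊆ {x | H.S i x ∈ P}) ∧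
    -- (K6) every P ∈ W is sᵢ(Q) for some i and some Q ∈ W
    (∀ P : Set A, IsPrimeFilter P → ∃ (i : Fin 2) (Q : Set A),
      IsPrimeFilter Q ∧ P = {x | H.S i x ∈ Q}) := by
  refine ⟨fun P hP i => H.isPrimeFilter_preimage_S hP i, fun P _ => subset_rfl,
    fun P Q T _ _ _ hPQ hQT => hPQ.trans hQT, ?_, fun P hP => H.preimage_S_zero_subset hP,
    fun P hP => H.subset_preimage_S_one hP,
    fun P Q hP hQ hPQ i => ⟨fun _ hx => hPQ hx, H.preimage_S_subset_of_subset hP hQ hPQ i⟩, ?_⟩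
  · exact fun P _ i j => Set.ext fun x => by simp only [Set.mem_ofPred_eq, H.S_S]
  · intro P hP
    rcases H.eq_preimage_S_zero_or_eq_preimage_S_one hP with h | h
    · exact ⟨0, P, hP, h⟩
    · exact ⟨1, P, hP, h⟩
end
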